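/- Let G be a finite connected simple graph and let H be a connected subgraph of G on at least two vertices. Suppose v ∈ ∂H with witness u (i.e. Σ_{w ∈ N_H(v)} d_H(w,u) < deg_H(v)·d_H(v,u)). If N_H(v) = N_G(v) and d_H(v,u) = 2, then v ∈ ∂G. -/

import Mathlib

open Finset
open scoped Classical

variable {V : Type*}

/-- The Steinerberger boundary of a graph. -/
noncomputable def sBoundary (G : SimpleGraph V) [Fintype V] : Set V :=
  if Fintype.card V = 1 then Set.univ
  else {v | ∃ u : V, ∑ w ∈ G.neighborFinset v, G.dist w u < G.degree v * G.dist v u}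

lemma dist_le_subgraph_dist {G : SimpleGraph V} {H : G.Subgraph} (hH : H.Connected)
    (a b : H.verts) : G.dist a b ≤ H.coe.dist a b := by
  obtain ⟨p, hp⟩ := (hH.coe a b).exists_walk_length_eq_dist
  calc G.dist a b ≤ (p.map H.hom).length := SimpleGraph.dist_le _
    _ = H.coe.dist a b := by rw [SimpleGraph.Walk.length_map, hp]

theorem mem_sBoundary_of_subgraph_dist_two [Fintype V] (G : SimpleGraph V) (hG : G.Connected)
    (H : G.Subgraph) (hH : H.Connected) (hcard : 2 ≤ H.verts.ncard)
    (v u : V) (hv : v ∈ H.verts) (hu : u ∈ H.verts)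
    (hwit : ∑ w ∈ H.coe.neighborFinset ⟨v, hv⟩, H.coe.dist w ⟨u, hu⟩
      < H.coe.degree ⟨v, hv⟩ * H.coe.dist ⟨v, hv⟩ ⟨u, hu⟩)
    (hN : H.neighborSet v = G.neighborSet v)
    (hd : H.coe.dist ⟨v, hv⟩ ⟨u, hu⟩ = 2) :
    v ∈ sBoundary G := by
  unfold sBoundary
  split
  · trivial
  refine ⟨u, ?_⟩
  have hvu : v ≠ u := by
    intro h; subst h
    simp [SimpleGraph.dist_self] at hd
  -- G.dist v u = 2
  have hle2 : G.dist v u ≤ 2 := hd ▸ dist_le_subgraph_dist hH ⟨v, hv⟩ ⟨u, hu⟩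
  have hne1 : G.dist v u ≠ 1 := by
    intro h1
    have hadj : G.Adj v u := SimpleGraph.dist_eq_one_iff_adj.mp h1
    have : H.Adj v u := by
      have : u ∈ H.neighborSet v := by rw [hN]; exact hadj
      exact this
    have : H.coe.Adj ⟨v, hv⟩ ⟨u, hu⟩ := this
    have := SimpleGraph.dist_eq_one_iff_adj.mpr this
    omega
  have hpos : 0 < G.dist v u := hG.pos_dist_of_ne hvu
  have hdG : G.dist v u = 2 := by omega
  -- degree equality
  have hdeg : G.degree v = H.coe.degree ⟨v, hv⟩ := by
    rw [SimpleGraph.degree, SimpleGraph.degree]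
    symm
    apply Finset.card_bij (fun (w : H.verts) _ => (w : V))
    · intro w hw
      rw [SimpleGraph.mem_neighborFinset] at hw ⊢
      have : (w : V) ∈ H.neighborSet v := hw
      rw [hN] at this; exact this
    · intro a ha b hb hab
      exact Subtype.ext hab
    · intro w hw
      rw [SimpleGraph.mem_neighborFinset] at hw
      have hwH : w ∈ H.neighborSet v := by rw [hN]; exact hw
      have hwverts : w ∈ H.verts := H.edge_vert (SimpleGraph.Subgraph.Adj.symm hwH)
      refine ⟨⟨w, hwverts⟩, ?_, rfl⟩
      rw [SimpleGraph.mem_neighborFinset]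
      exact hwH
  -- sum comparison
  have hsum : ∑ w ∈ G.neighborFinset v, G.dist w u
      ≤ ∑ w ∈ H.coe.neighborFinset ⟨v, hv⟩, H.coe.dist w ⟨u, hu⟩ := by
    have heq : ∑ w ∈ G.neighborFinset v, G.dist w u
        = ∑ w ∈ H.coe.neighborFinset ⟨v, hv⟩, G.dist (w : V) u := by
      symm
      apply Finset.sum_bij (fun (w : H.verts) _ => (w : V))
      · intro w hw
        rw [SimpleGraph.mem_neighborFinset] at hw ⊢
        have : (w : V) ∈ H.neighborSet v := hw
        rw [hN] at this; exact this
      · intro a _ b _ hab; exact Subtype.ext hab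
      · intro w hw
        rw [SimpleGraph.mem_neighborFinset] at hw
        have hwH : w ∈ H.neighborSet v := by rw [hN]; exact hw
        have hwverts : w ∈ H.verts := H.edge_vert (SimpleGraph.Subgraph.Adj.symm hwH)
        exact ⟨⟨w, hwverts⟩, by rw [SimpleGraph.mem_neighborFinset]; exact hwH, rfl⟩
      · intro w _; rfl
    rw [heq]
    exact Finset.sum_le_sum fun w _ => dist_le_subgraph_dist hH w ⟨u, hu⟩
  calc ∑ w ∈ G.neighborFinset v, G.dist w u
      ≤ ∑ w ∈ H.coe.neighborFinset ⟨v, hv⟩, H.coe.dist w ⟨u, hu⟩ := hsum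
    _ < H.coe.degree ⟨v, hv⟩ * H.coe.dist ⟨v, hv⟩ ⟨u, hu⟩ := hwit
    _ = G.degree v * G.dist v u := by rw [hdeg, hd, hdG]
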